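/- On the Lie algebra L₆,₁, the two-form ω = e¹⁴ + e²⁵ - e³⁶ satisfies d(ω∧ω) = 0. -/

import Mathlib

/-!
STATEMENT 8: On the Lie algebra L₆,₁, the two-form ω = e¹⁴ + e²⁵ - e³⁶ satisfies
d(ω∧ω) = 0.

Model: indices shifted to 0,…,5; forms are encoded by their values on basis tuples.
The wedge ω∧ω is computed by the shuffle formula
(ω∧ω)(x₁,…,x₄) = (1/(2!·2!)) Σ_{σ∈S₄} sign(σ) ω(x_{σ(1)},x_{σ(2)}) ω(x_{σ(3)},x_{σ(4)}),
and d is the Chevalley–Eilenberg differential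
dτ(x₀,…,x₄) = Σ_{p<q} (-1)^{p+q} τ([x_p,x_q], …remaining…).
-/

/-- Value of e^a ∧ e^b on (e_i, e_j). -/
def wf (a b i j : Fin 6) : ℝ :=
  (if a = i then (1:ℝ) else 0) * (if b = j then (1:ℝ) else 0) -
  (if a = j then (1:ℝ) else 0) * (if b = i then (1:ℝ) else 0)

/-- Structure equations of L₆,₁. -/
def dL61 (k i j : Fin 6) : ℝ :=
  if k = 0 then wf 1 2 i j
  else if k = 1 then -(wf 0 2 i j)
  else if k = 2 then wf 0 1 i j
  else if k = 3 then wf 1 5 i j - wf 2 4 i j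
  else if k = 4 then -(wf 0 5 i j) + wf 2 3 i j
  else wf 0 4 i j - wf 1 3 i j

/-- Structure constants: the e^m-coefficient of [e_i,e_j] is -(de^m)(e_i,e_j). -/
def BcL61 (m i j : Fin 6) : ℝ := -(dL61 m i j)

/-- Coefficients (basis values) of ω = e¹⁴ + e²⁵ - e³⁶. -/
def omL61 (i j : Fin 6) : ℝ := wf 0 3 i j + wf 1 4 i j - wf 2 5 i j

/-- Basis values of the wedge square ω∧ω. -/
noncomputable def omom (i j k l : Fin 6) : ℝ :=
  (1/4 : ℝ) * ∑ σ : Equiv.Perm (Fin 4),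
    ((Equiv.Perm.sign σ : ℤ) : ℝ) *
      omL61 (![i,j,k,l] (σ 0)) (![i,j,k,l] (σ 1)) * omL61 (![i,j,k,l] (σ 2)) (![i,j,k,l] (σ 3))

/-- The Chevalley–Eilenberg differential of a 4-form (given by its basis values),
evaluated on a basis 5-tuple. -/
def d4L61 (t : Fin 6 → Fin 6 → Fin 6 → Fin 6 → ℝ) (a b c d e : Fin 6) : ℝ :=
  -(∑ m : Fin 6, BcL61 m a b * t m c d e) + (∑ m : Fin 6, BcL61 m a c * t m b d e)
  - (∑ m : Fin 6, BcL61 m a d * t m b c e) + (∑ m : Fin 6, BcL61 m a e * t m b c d)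
  - (∑ m : Fin 6, BcL61 m b c * t m a d e) + (∑ m : Fin 6, BcL61 m b d * t m a c e)
  - (∑ m : Fin 6, BcL61 m b e * t m a c d) - (∑ m : Fin 6, BcL61 m c d * t m a b e)
  + (∑ m : Fin 6, BcL61 m c e * t m a b d) - (∑ m : Fin 6, BcL61 m d e * t m a b c)

/-!
Being alternating, a 5-form on a 6-dimensional space is determined by its values on the six
increasing basis 5-tuples `(e_i)_{i ≠ k}`. The Chevalley–Eilenberg differential of a 4-form that is
alternating is again alternating (only the antisymmetry of the bracket is needed), and `ω ∧ ω` is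
alternating because `ω` is. Hence `d(ω ∧ ω) = 0` reduces to six explicit evaluations.
-/

open Equiv Equiv.Perm Function

section Alternating

variable {R : Type*} [AddCommGroup R] {α : Type*} {n : ℕ} {f : (Fin (n + 1) → α) → R}

theorem apply_comp_perm_eq_sign_smul
    (hf : ∀ v (i : Fin n), f (v ∘ swap i.castSucc i.succ) = -f v) (σ : Perm (Fin (n + 1)))
    (v : Fin (n + 1) → α) : f (v ∘ σ) = sign σ • f v := by
  have hσ : σ ∈ Submonoid.closure _ := mclosure_swap_castSucc_succ n ▸ Submonoid.mem_top σ
  induction hσ using Submonoid.closure_induction generalizing v with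
  | mem τ hτ =>
    obtain ⟨i, rfl⟩ := hτ
    rw [hf, sign_swap (Fin.castSucc_lt_succ (i := i)).ne, Units.neg_smul, one_smul]
  | one => simp
  | mul σ τ _ _ hσ hτ => rw [coe_mul, ← comp_assoc, hτ, hσ, Perm.sign_mul, mul_comm, mul_smul]

variable [IsAddTorsionFree R]

theorem apply_eq_zero_of_not_injective
    (hf : ∀ v (i : Fin n), f (v ∘ swap i.castSucc i.succ) = -f v)
    {v : Fin (n + 1) → α} (hv : ¬ Injective v) : f v = 0 := by
  obtain ⟨i, j, hij, hne⟩ : ∃ i j, v i = v j ∧ i ≠ j := by simpa [Injective] using hv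
  have hfix : v ∘ swap i j = v := by
    funext k
    rcases eq_or_ne k i with rfl | hki
    · simp [hij]
    rcases eq_or_ne k j with rfl | hkj
    · simp [hij]
    · simp [swap_apply_of_ne_of_ne hki hkj]
  have := apply_comp_perm_eq_sign_smul hf (swap i j) v
  rw [hfix, sign_swap hne, Units.neg_smul, one_smul] at this
  exact self_eq_neg.mp this

variable [LinearOrder α]

theorem apply_eq_zero_of_forall_strictMono
    (hf : ∀ v (i : Fin n), f (v ∘ swap i.castSucc i.succ) = -f v)
    (h : ∀ v, StrictMono v → f v = 0) (v : Fin (n + 1) → α) : f v = 0 := by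
  by_cases hv : Injective v
  · have hsorted : StrictMono (v ∘ Tuple.sort v) :=
      (Tuple.monotone_sort v).strictMono_of_injective (hv.comp (Tuple.sort v).injective)
    have := apply_comp_perm_eq_sign_smul hf (Tuple.sort v) v
    rwa [h _ hsorted, eq_comm, smul_eq_zero_iff_eq] at this
  · exact apply_eq_zero_of_not_injective hf hv

end Alternating

theorem Fin.exists_succAbove_eq_of_strictMono {n : ℕ} {v : Fin n → Fin (n + 1)}
    (hv : StrictMono v) : ∃ k : Fin (n + 1), v = k.succAbove := by
  obtain ⟨k, hk⟩ : ∃ k, k ∉ Set.range v := by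
    by_contra! h
    have := Fintype.card_le_of_surjective v fun k ↦ h k
    simp at this
  refine ⟨k, (hv.range_inj (Fin.strictMono_succAbove k)).mp ?_⟩
  refine Set.eq_of_subset_of_ncard_le ?_ ?_
  · rintro _ ⟨i, rfl⟩
    rw [Fin.range_succAbove]
    exact fun h ↦ hk ⟨i, h⟩
  · rw [Set.ncard_range_of_injective hv.injective,
      Set.ncard_range_of_injective (Fin.strictMono_succAbove k).injective]

theorem apply_eq_zero_of_forall_succAbove {R : Type*} [AddCommGroup R] [IsAddTorsionFree R]
    {n : ℕ} {f : (Fin (n + 1) → Fin (n + 2)) → R}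
    (hf : ∀ v (i : Fin n), f (v ∘ swap i.castSucc i.succ) = -f v)
    (h : ∀ k : Fin (n + 2), f k.succAbove = 0) (v : Fin (n + 1) → Fin (n + 2)) : f v = 0 :=
  apply_eq_zero_of_forall_strictMono hf (fun _ hv ↦ by
    obtain ⟨k, rfl⟩ := Fin.exists_succAbove_eq_of_strictMono hv
    exact h k) v

theorem sum_perm_fin_succ {M : Type*} [AddCommMonoid M] {n : ℕ} (f : Perm (Fin (n + 1)) → M) :
    ∑ σ, f σ = ∑ p, ∑ τ : Perm (Fin n), f (decomposeFin.symm (p, τ)) := by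
  rw [Finset.univ_perm_fin_succ, Finset.sum_map, ← Finset.univ_product_univ, Finset.sum_product]
  rfl

theorem wf_swap (a b i j : Fin 6) : wf a b j i = -wf a b i j := by
  simp only [wf]
  ring

theorem BcL61_swap (m i j : Fin 6) : BcL61 m j i = -BcL61 m i j := by
  unfold BcL61 dL61
  split_ifs <;> simp only [wf_swap _ _ j i] <;> ring

theorem omL61_swap (i j : Fin 6) : omL61 j i = -omL61 i j := by
  simp only [omL61, wf_swap _ _ j i]
  ring

theorem omom_eq (i j k l : Fin 6) :
    omom i j k l = 2 * (omL61 i j * omL61 k l - omL61 i k * omL61 j l + omL61 i l * omL61 j k) := by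
  -- `decomposeFin_symm_apply_succ` only fires on arguments written as `Fin.succ _`
  simp only [omom, sum_perm_fin_succ, Fintype.sum_unique, Fin.sum_univ_succ,
    show (3 : Fin 4) = Fin.succ 2 from rfl, show (2 : Fin 4) = Fin.succ 1 from rfl,
    show (1 : Fin 4) = Fin.succ 0 from rfl, show (2 : Fin 3) = Fin.succ 1 from rfl,
    show (1 : Fin 3) = Fin.succ 0 from rfl, show (1 : Fin 2) = Fin.succ 0 from rfl,
    decomposeFin_symm_apply_zero, decomposeFin_symm_apply_succ, decomposeFin.symm_sign]
  simp only [one_div, ↓reduceIte, default_eq, Perm.sign_one, mul_one, Units.val_one, Int.cast_one,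
    Nat.succ_eq_add_one, Nat.reduceAdd, Fin.isValue, Matrix.cons_val_zero, swap_self,
    Fin.succ_zero_eq_one, refl_apply, Matrix.cons_val_one, one_mul, Fin.succ_one_eq_two,
    Matrix.cons_val, coe_one, id_eq, Fin.reduceSucc, Fin.default_eq_zero, one_ne_zero, mul_neg,
    Units.val_neg, Int.reduceNeg, Int.cast_neg, neg_mul, swap_apply_right, swap_apply_def,
    Fin.reduceEq, neg_neg]
  rw [omL61_swap j i, omL61_swap k i, omL61_swap l i, omL61_swap k j, omL61_swap l j,
    omL61_swap l k]
  ring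

theorem omom_swap_12 (m x y z : Fin 6) : omom m y x z = -omom m x y z := by
  simp only [omom_eq, omL61_swap y x]
  ring

theorem omom_swap_23 (m x y z : Fin 6) : omom m x z y = -omom m x y z := by
  simp only [omom_eq, omL61_swap z y]
  ring

def d4L61Tuple (t : Fin 6 → Fin 6 → Fin 6 → Fin 6 → ℝ) (v : Fin 5 → Fin 6) : ℝ :=
  d4L61 t (v 0) (v 1) (v 2) (v 3) (v 4)

theorem d4L61Tuple_comp_swap {t : Fin 6 → Fin 6 → Fin 6 → Fin 6 → ℝ}
    (ht₁₂ : ∀ m x y z, t m y x z = -t m x y z) (ht₂₃ : ∀ m x y z, t m x z y = -t m x y z)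
    (v : Fin 5 → Fin 6) (i : Fin 4) :
    d4L61Tuple t (v ∘ swap i.castSucc i.succ) = -d4L61Tuple t v := by
  fin_cases i <;>
  simp only [d4L61Tuple, Fin.zero_eta, Fin.mk_one, Fin.reduceFinMk, Fin.castSucc_zero,
    Fin.succ_zero_eq_one, Fin.castSucc_one, Fin.succ_one_eq_two, Fin.reduceCastSucc, Fin.reduceSucc,
    comp_apply, swap_apply_left, swap_apply_right, ne_eq, Fin.reduceEq, zero_ne_one,
    not_false_eq_true, swap_apply_of_ne_of_ne] <;>
  -- each antisymmetry is oriented towards increasing arguments, a normal form shared by both sides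
  simp only [d4L61, BcL61_swap _ (v 0) (v 1), BcL61_swap _ (v 1) (v 2), BcL61_swap _ (v 2) (v 3),
    BcL61_swap _ (v 3) (v 4), ht₁₂ _ (v 0) (v 1), ht₁₂ _ (v 1) (v 2), ht₁₂ _ (v 2) (v 3),
    ht₂₃ _ _ (v 1) (v 2), ht₂₃ _ _ (v 2) (v 3), ht₂₃ _ _ (v 3) (v 4), neg_mul, mul_neg,
    Finset.sum_neg_distrib] <;>
  ring

theorem d4L61Tuple_omom_succAbove (k : Fin 6) : d4L61Tuple omom k.succAbove = 0 := by
  fin_cases k <;> simp [d4L61Tuple, d4L61, omom_eq, omL61, BcL61, dL61, wf, Fin.succAbove]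

/-- d(ω∧ω) = 0 on L₆,₁. -/
theorem L61_omom_closed : ∀ a b c d e : Fin 6, d4L61 omom a b c d e = 0 := fun a b c d e ↦
  apply_eq_zero_of_forall_succAbove (d4L61Tuple_comp_swap omom_swap_12 omom_swap_23)
    d4L61Tuple_omom_succAbove ![a, b, c, d, e]
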